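/- arXiv:2405.17714 — 3 statements merged into one kernel-verified Lean document; each statement's English description precedes it below -/
import Mathlib

section
/- Let Ω ⊂ ℝ² be open, μ ∈ ℝ, and let F be a C¹ symmetric 2-tensor field on Ω that is incompressible (δF = 0), with Fourier modes f₀ = (f₁₁+f₂₂)/2, f₂ = (f₁₁−f₂₂)/4 + i f₁₂/2. Suppose u₀ : Ω → ℝ and u₋₁, u₋₂, u₋₃ : Ω → ℂ are C² and satisfy on Ω: (i) 2 Re(∂u₋₁) + μ u₀ = f₀; (ii) ∂̄u₀ + ∂u₋₂ + μ u₋₁ = 0; (iii) ∂̄u₋₁ + ∂u₋₃ + μ u₋₂ = f₂. Then on Ω: Δu₋₁ + 4∂̄(Re ∂u₋₁) − 2μ² u₋₁ = −4∂²u₋₃ − 2μ ∂u₋₂. -/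
open Complex MeasureTheory

/-- First partial derivative of a complex-valued function on `ℝ × ℝ`. -/
noncomputable def pd1C (v : ℝ × ℝ → ℂ) (x : ℝ × ℝ) : ℂ := fderiv ℝ v x (1, 0)

/-- Second partial derivative of a complex-valued function on `ℝ × ℝ`. -/
noncomputable def pd2C (v : ℝ × ℝ → ℂ) (x : ℝ × ℝ) : ℂ := fderiv ℝ v x (0, 1)

/-- First partial derivative of a real-valued function on `ℝ × ℝ`. -/
noncomputable def pd1R (v : ℝ × ℝ → ℝ) (x : ℝ × ℝ) : ℝ := fderiv ℝ v x (1, 0)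

/-- Second partial derivative of a real-valued function on `ℝ × ℝ`. -/
noncomputable def pd2R (v : ℝ × ℝ → ℝ) (x : ℝ × ℝ) : ℝ := fderiv ℝ v x (0, 1)

/-- Wirtinger derivative `∂ = (∂₁ - i ∂₂)/2`. -/
noncomputable def wd (v : ℝ × ℝ → ℂ) (x : ℝ × ℝ) : ℂ :=
  (pd1C v x - Complex.I * pd2C v x) / 2

/-- Conjugate Wirtinger derivative `∂̄ = (∂₁ + i ∂₂)/2`. -/
noncomputable def wdbar (v : ℝ × ℝ → ℂ) (x : ℝ × ℝ) : ℂ :=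
  (pd1C v x + Complex.I * pd2C v x) / 2

/-- Laplacian of a complex-valued function on `ℝ × ℝ`. -/
noncomputable def lapC (v : ℝ × ℝ → ℂ) (x : ℝ × ℝ) : ℂ :=
  pd1C (pd1C v) x + pd2C (pd2C v) x

/-- Laplacian of a real-valued function on `ℝ × ℝ`. -/
noncomputable def lapR (v : ℝ × ℝ → ℝ) (x : ℝ × ℝ) : ℝ :=
  pd1R (pd1R v) x + pd2R (pd2R v) x

section Helpers

lemma fderivC_ofReal {g : ℝ × ℝ → ℝ} {x : ℝ × ℝ} (hg : DifferentiableAt ℝ g x) (w : ℝ × ℝ) :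
    fderiv ℝ (fun y => ((g y : ℝ) : ℂ)) x w = ((fderiv ℝ g x w : ℝ) : ℂ) := by
  have h : HasFDerivAt (fun y => ((g y : ℝ) : ℂ))
      (Complex.ofRealCLM.comp (fderiv ℝ g x)) x :=
    Complex.ofRealCLM.hasFDerivAt.comp x hg.hasFDerivAt
  rw [h.fderiv]; rfl

lemma diff_pd {v : ℝ × ℝ → ℂ} {x : ℝ × ℝ} (hv : ContDiffAt ℝ 2 v x) (w : ℝ × ℝ) :
    DifferentiableAt ℝ (fun y => fderiv ℝ v y w) x := by
  have h := hv.fderiv_right (m := 1) (by norm_num)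
  have he : (fun y => fderiv ℝ v y w) =
      (fun L : (ℝ × ℝ) →L[ℝ] ℂ => L w) ∘ (fderiv ℝ v) := rfl
  rw [he]
  exact ((ContinuousLinearMap.apply ℝ ℂ w).differentiable.differentiableAt).comp x
    (h.differentiableAt one_ne_zero)

lemma pd_pd {v : ℝ × ℝ → ℂ} {x : ℝ × ℝ} (hv : ContDiffAt ℝ 2 v x) (w w' : ℝ × ℝ) :
    fderiv ℝ (fun y => fderiv ℝ v y w) x w' = fderiv ℝ (fderiv ℝ v) x w' w := by
  have h := hv.fderiv_right (m := 1) (by norm_num)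
  have hd : DifferentiableAt ℝ (fderiv ℝ v) x := h.differentiableAt one_ne_zero
  have he : (fun y => fderiv ℝ v y w) =
      (ContinuousLinearMap.apply ℝ ℂ w) ∘ (fderiv ℝ v) := rfl
  rw [he, ((ContinuousLinearMap.apply ℝ ℂ w).hasFDerivAt.comp x hd.hasFDerivAt).fderiv]
  rfl

lemma pd_symm {v : ℝ × ℝ → ℂ} {x : ℝ × ℝ} (hv : ContDiffAt ℝ 2 v x) :
    fderiv ℝ (fun y => fderiv ℝ v y ((0 : ℝ), (1 : ℝ))) x ((1 : ℝ), (0 : ℝ))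
      = fderiv ℝ (fun y => fderiv ℝ v y ((1 : ℝ), (0 : ℝ))) x ((0 : ℝ), (1 : ℝ)) := by
  rw [pd_pd hv _ _, pd_pd hv _ _]
  exact hv.isSymmSndFDerivAt (by norm_num) _ _

lemma comboC2 {F G : ℝ × ℝ → ℂ} {x : ℝ × ℝ} (a b : ℂ)
    (hF : DifferentiableAt ℝ F x) (hG : DifferentiableAt ℝ G x) (w : ℝ × ℝ) :
    fderiv ℝ (fun y => a * F y + b * G y) x w
      = a * fderiv ℝ F x w + b * fderiv ℝ G x w := by
  rw [HasFDerivAt.fderiv (f := fun y => a * F y + b * G y)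
    ((hF.hasFDerivAt.const_mul a).add (hG.hasFDerivAt.const_mul b))]
  simp

lemma comboC' {F G H : ℝ × ℝ → ℂ} {x : ℝ × ℝ} (c : ℂ)
    (hF : DifferentiableAt ℝ F x) (hG : DifferentiableAt ℝ G x)
    (hH : DifferentiableAt ℝ H x) (w : ℝ × ℝ) :
    fderiv ℝ (fun y => F y + G y + c * H y) x w
      = fderiv ℝ F x w + fderiv ℝ G x w + c * fderiv ℝ H x w := by
  rw [HasFDerivAt.fderiv (f := fun y => F y + G y + c * H y)
    ((hF.hasFDerivAt.add hG.hasFDerivAt).add (hH.hasFDerivAt.const_mul c))]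
  simp

lemma comboR2 {F G : ℝ × ℝ → ℝ} {x : ℝ × ℝ} (a b : ℝ)
    (hF : DifferentiableAt ℝ F x) (hG : DifferentiableAt ℝ G x) (w : ℝ × ℝ) :
    fderiv ℝ (fun y => a * F y + b * G y) x w
      = a * fderiv ℝ F x w + b * fderiv ℝ G x w := by
  rw [HasFDerivAt.fderiv (f := fun y => a * F y + b * G y)
    ((hF.hasFDerivAt.const_mul a).add (hG.hasFDerivAt.const_mul b))]
  simp

lemma comboR3 {F G H : ℝ × ℝ → ℝ} {x : ℝ × ℝ} (a b c : ℝ)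
    (hF : DifferentiableAt ℝ F x) (hG : DifferentiableAt ℝ G x)
    (hH : DifferentiableAt ℝ H x) (w : ℝ × ℝ) :
    fderiv ℝ (fun y => a * F y + b * G y + c * H y) x w
      = a * fderiv ℝ F x w + b * fderiv ℝ G x w + c * fderiv ℝ H x w := by
  rw [HasFDerivAt.fderiv (f := fun y => a * F y + b * G y + c * H y)
    (((hF.hasFDerivAt.const_mul a).add (hG.hasFDerivAt.const_mul b)).add
    (hH.hasFDerivAt.const_mul c))]
  simp

lemma pdC_ofReal_pair {g h : ℝ × ℝ → ℝ} {x : ℝ × ℝ}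
    (hg : DifferentiableAt ℝ g x) (hh : DifferentiableAt ℝ h x) (w : ℝ × ℝ) :
    fderiv ℝ (fun y => ((g y : ℝ) : ℂ) + Complex.I * ((h y : ℝ) : ℂ)) x w
      = ((fderiv ℝ g x w : ℝ) : ℂ) + Complex.I * ((fderiv ℝ h x w : ℝ) : ℂ) := by
  have h1 : HasFDerivAt (fun y => ((g y : ℝ) : ℂ))
      (Complex.ofRealCLM.comp (fderiv ℝ g x)) x :=
    Complex.ofRealCLM.hasFDerivAt.comp x hg.hasFDerivAt
  have h2 : HasFDerivAt (fun y => ((h y : ℝ) : ℂ))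
      (Complex.ofRealCLM.comp (fderiv ℝ h x)) x :=
    Complex.ofRealCLM.hasFDerivAt.comp x hh.hasFDerivAt
  rw [HasFDerivAt.fderiv (f := fun y => ((g y : ℝ) : ℂ) + Complex.I * ((h y : ℝ) : ℂ))
    (h1.add (h2.const_mul Complex.I))]
  simp

end Helpers

/-- for an incompressible C¹ tensor field and C² Fourier modes
satisfying the mode equations (i)–(iii), one has
`Δu₋₁ + 4∂̄(Re ∂u₋₁) − 2μ²u₋₁ = −4∂²u₋₃ − 2μ∂u₋₂` on Ω. -/
theorem um1_elliptic_equation_incompressible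
    (Ω : Set (ℝ × ℝ)) (hΩ : IsOpen Ω) (μ : ℝ)
    (f11 f12 f22 : ℝ × ℝ → ℝ)
    (h11 : ContDiffOn ℝ 1 f11 Ω) (h12 : ContDiffOn ℝ 1 f12 Ω)
    (h22 : ContDiffOn ℝ 1 f22 Ω)
    (hinc : ∀ x ∈ Ω,
      pd1R f11 x + pd2R f12 x = 0 ∧ pd1R f12 x + pd2R f22 x = 0)
    (u0 : ℝ × ℝ → ℝ) (um1 um2 um3 : ℝ × ℝ → ℂ)
    (hu0 : ContDiffOn ℝ 2 u0 Ω) (hum1 : ContDiffOn ℝ 2 um1 Ω)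
    (hum2 : ContDiffOn ℝ 2 um2 Ω) (hum3 : ContDiffOn ℝ 2 um3 Ω)
    (heq0 : ∀ x ∈ Ω, 2 * (wd um1 x).re + μ * u0 x = (f11 x + f22 x) / 2)
    (heq1 : ∀ x ∈ Ω,
      wdbar (fun y => ((u0 y : ℝ) : ℂ)) x + wd um2 x + (μ : ℂ) * um1 x = 0)
    (heq2 : ∀ x ∈ Ω, wdbar um1 x + wd um3 x + (μ : ℂ) * um2 x
      = (((f11 x - f22 x) / 4 : ℝ) : ℂ) + Complex.I * ((f12 x / 2 : ℝ) : ℂ)) :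
    ∀ x ∈ Ω,
      lapC um1 x + 4 * wdbar (fun y => (((wd um1 y).re : ℝ) : ℂ)) x
          - 2 * (μ : ℂ) ^ 2 * um1 x
        = -4 * wd (wd um3) x - 2 * (μ : ℂ) * wd um2 x := by
  intro x hx
  unfold wd pd1C pd2C at heq0
  unfold wdbar wd pd1C pd2C at heq1
  unfold wdbar wd pd1C pd2C at heq2
  unfold pd1R pd2R at hinc
  unfold lapC wd wdbar pd1C pd2C
  have hmem : Ω ∈ nhds x := hΩ.mem_nhds hx
  -- regularity at x
  have hu0x : ContDiffAt ℝ 2 u0 x := hu0.contDiffAt hmem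
  have hum1x : ContDiffAt ℝ 2 um1 x := hum1.contDiffAt hmem
  have hum2x : ContDiffAt ℝ 2 um2 x := hum2.contDiffAt hmem
  have hum3x : ContDiffAt ℝ 2 um3 x := hum3.contDiffAt hmem
  have hu0d : DifferentiableAt ℝ u0 x := hu0x.differentiableAt (by norm_num)
  have hum2d : DifferentiableAt ℝ um2 x := hum2x.differentiableAt (by norm_num)
  have hf11d : DifferentiableAt ℝ f11 x :=
    (h11.contDiffAt hmem).differentiableAt one_ne_zero
  have hf12d : DifferentiableAt ℝ f12 x :=
    (h12.contDiffAt hmem).differentiableAt one_ne_zero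
  have hf22d : DifferentiableAt ℝ f22 x :=
    (h22.contDiffAt hmem).differentiableAt one_ne_zero
  have d1u1 : DifferentiableAt ℝ (fun y => fderiv ℝ um1 y (1, 0)) x := diff_pd hum1x _
  have d2u1 : DifferentiableAt ℝ (fun y => fderiv ℝ um1 y (0, 1)) x := diff_pd hum1x _
  have d1u3 : DifferentiableAt ℝ (fun y => fderiv ℝ um3 y (1, 0)) x := diff_pd hum3x _
  have d2u3 : DifferentiableAt ℝ (fun y => fderiv ℝ um3 y (0, 1)) x := diff_pd hum3x _
  -- shapes
  have hPshape : (fun y => ((fderiv ℝ um1 y) (1, 0) + Complex.I * (fderiv ℝ um1 y) (0, 1)) / 2)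
      = (fun y => (1/2 : ℂ) * (fderiv ℝ um1 y) (1, 0)
          + (Complex.I/2) * (fderiv ℝ um1 y) (0, 1)) := by
    funext y; ring
  have hQshape : (fun y => ((fderiv ℝ um3 y) (1, 0) - Complex.I * (fderiv ℝ um3 y) (0, 1)) / 2)
      = (fun y => (1/2 : ℂ) * (fderiv ℝ um3 y) (1, 0)
          + (-(Complex.I/2)) * (fderiv ℝ um3 y) (0, 1)) := by
    funext y; ring
  have hP : DifferentiableAt ℝ
      (fun y => ((fderiv ℝ um1 y) (1, 0) + Complex.I * (fderiv ℝ um1 y) (0, 1)) / 2) x := by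
    rw [hPshape]; exact (d1u1.const_mul _).add (d2u1.const_mul _)
  have hQ : DifferentiableAt ℝ
      (fun y => ((fderiv ℝ um3 y) (1, 0) - Complex.I * (fderiv ℝ um3 y) (0, 1)) / 2) x := by
    rw [hQshape]; exact (d1u3.const_mul _).add (d2u3.const_mul _)
  -- equation (ii) at x
  have e0 := heq1 x hx
  rw [fderivC_ofReal hu0d (1, 0), fderivC_ofReal hu0d (0, 1)] at e0
  -- the Re(∂u₋₁) term via equation (i)
  have hevW : (fun y => ((((fderiv ℝ um1 y) (1, 0) - Complex.I * (fderiv ℝ um1 y) (0, 1)) / 2).re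
        : ℂ))
      =ᶠ[nhds x] (fun y => (((1/4 : ℝ) * f11 y + (1/4 : ℝ) * f22 y + (-(μ/2)) * u0 y : ℝ) : ℂ)) := by
    filter_upwards [hmem] with y hy
    have h := heq0 y hy
    rw [Complex.ofReal_inj]
    linarith
  have hWd := hevW.fderiv_eq (𝕜 := ℝ)
  have hg0d : DifferentiableAt ℝ
      (fun y => (1/4 : ℝ) * f11 y + (1/4 : ℝ) * f22 y + (-(μ/2)) * u0 y) x :=
    ((hf11d.const_mul _).add (hf22d.const_mul _)).add (hu0d.const_mul _)
  have hW1 : (fderiv ℝ (fun y => ((((fderiv ℝ um1 y) (1, 0)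
        - Complex.I * (fderiv ℝ um1 y) (0, 1)) / 2).re : ℂ)) x) (1, 0)
      = (((1/4 : ℝ) * fderiv ℝ f11 x (1, 0) + (1/4 : ℝ) * fderiv ℝ f22 x (1, 0)
          + (-(μ/2)) * fderiv ℝ u0 x (1, 0) : ℝ) : ℂ) := by
    rw [hWd, fderivC_ofReal hg0d (1, 0), comboR3 _ _ _ hf11d hf22d hu0d]
  have hW2 : (fderiv ℝ (fun y => ((((fderiv ℝ um1 y) (1, 0)
        - Complex.I * (fderiv ℝ um1 y) (0, 1)) / 2).re : ℂ)) x) (0, 1)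
      = (((1/4 : ℝ) * fderiv ℝ f11 x (0, 1) + (1/4 : ℝ) * fderiv ℝ f22 x (0, 1)
          + (-(μ/2)) * fderiv ℝ u0 x (0, 1) : ℝ) : ℂ) := by
    rw [hWd, fderivC_ofReal hg0d (0, 1), comboR3 _ _ _ hf11d hf22d hu0d]
  -- differentiate equation (iii)
  have hev2 : (fun y => ((fderiv ℝ um1 y) (1, 0) + Complex.I * (fderiv ℝ um1 y) (0, 1)) / 2
        + ((fderiv ℝ um3 y) (1, 0) - Complex.I * (fderiv ℝ um3 y) (0, 1)) / 2
        + (μ : ℂ) * um2 y)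
      =ᶠ[nhds x] (fun y => (((f11 y - f22 y) / 4 : ℝ) : ℂ)
        + Complex.I * ((f12 y / 2 : ℝ) : ℂ)) := by
    filter_upwards [hmem] with y hy using heq2 y hy
  have hfe2 := hev2.fderiv_eq (𝕜 := ℝ)
  have hg2shape : (fun y => (f11 y - f22 y) / 4)
      = (fun y => (1/4 : ℝ) * f11 y + (-(1/4 : ℝ)) * f22 y) := by funext y; ring
  have hg3shape : (fun y => f12 y / 2) = (fun y => (1/2 : ℝ) * f12 y + (0 : ℝ) * f11 y) := by
    funext y; ring
  have hg2d : DifferentiableAt ℝ (fun y => (f11 y - f22 y) / 4) x := by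
    rw [hg2shape]; exact (hf11d.const_mul _).add (hf22d.const_mul _)
  have hg3d : DifferentiableAt ℝ (fun y => f12 y / 2) x := by
    rw [hg3shape]; exact (hf12d.const_mul _).add (hf11d.const_mul _)
  have E31 : (fderiv ℝ (fun y => ((fderiv ℝ um1 y) (1, 0)
        + Complex.I * (fderiv ℝ um1 y) (0, 1)) / 2
        + ((fderiv ℝ um3 y) (1, 0) - Complex.I * (fderiv ℝ um3 y) (0, 1)) / 2
        + (μ : ℂ) * um2 y) x) (1, 0)
      = (fderiv ℝ (fun y => (((f11 y - f22 y) / 4 : ℝ) : ℂ)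
        + Complex.I * ((f12 y / 2 : ℝ) : ℂ)) x) (1, 0) := by rw [hfe2]
  have E32 : (fderiv ℝ (fun y => ((fderiv ℝ um1 y) (1, 0)
        + Complex.I * (fderiv ℝ um1 y) (0, 1)) / 2
        + ((fderiv ℝ um3 y) (1, 0) - Complex.I * (fderiv ℝ um3 y) (0, 1)) / 2
        + (μ : ℂ) * um2 y) x) (0, 1)
      = (fderiv ℝ (fun y => (((f11 y - f22 y) / 4 : ℝ) : ℂ)
        + Complex.I * ((f12 y / 2 : ℝ) : ℂ)) x) (0, 1) := by rw [hfe2]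
  rw [comboC' _ hP hQ hum2d, pdC_ofReal_pair hg2d hg3d, hPshape,
    comboC2 _ _ d1u1 d2u1, hg2shape, comboR2 _ _ hf11d hf22d, hg3shape,
    comboR2 _ _ hf12d hf11d] at E31 E32
  -- symmetry of second derivatives of um1
  have hsym := pd_symm hum1x
  -- incompressibility at x
  have hi1 := (hinc x hx).1
  have hi2 := (hinc x hx).2
  have hi1C : ((fderiv ℝ f11 x (1, 0) : ℝ) : ℂ) + ((fderiv ℝ f12 x (0, 1) : ℝ) : ℂ) = 0 := by
    exact_mod_cast hi1
  have hi2C : ((fderiv ℝ f12 x (1, 0) : ℝ) : ℂ) + ((fderiv ℝ f22 x (0, 1) : ℝ) : ℂ) = 0 := by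
    exact_mod_cast hi2
  -- conclude
  rw [hW1, hW2]
  push_cast at E31 E32 e0 ⊢
  linear_combination 2 * E31 - 2 * Complex.I * E32 - Complex.I * hsym
    - 2 * (μ : ℂ) * e0 + hi1C + Complex.I * hi2C
    + ((fderiv ℝ (fun y => (fderiv ℝ um1 y) (0, 1)) x) (0, 1)
      - (((fderiv ℝ f12 x) (0, 1) : ℝ) : ℂ)) * Complex.I_sq
end

section
/- Let Ω ⊂ ℝ² be open and μ ∈ ℝ with μ ≠ 0. Suppose u₀ : Ω → ℝ and u₋₁, u₋₂ : Ω → ℂ are C² and satisfy on Ω: (i) 2 Re(∂u₋₁) + μ u₀ = 0; (ii) ∂̄u₀ + ∂u₋₂ + μ u₋₁ = 0. Then on Ω: ∂u₋₁ = −(μ/2) u₀ − (i/μ) Im(∂²u₋₂). -/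
open Complex MeasureTheory Topology

private lemma pd_diffAt {F : Type*} [NormedAddCommGroup F] [NormedSpace ℝ F]
    {Ω : Set (ℝ × ℝ)} (hΩ : IsOpen Ω) {v : ℝ × ℝ → F}
    (hv : ContDiffOn ℝ 2 v Ω) (w : ℝ × ℝ) {x : ℝ × ℝ} (hx : x ∈ Ω) :
    DifferentiableAt ℝ (fun y => fderiv ℝ v y w) x := by
  have h1 : ContDiffOn ℝ 1 (fun y => fderiv ℝ v y) Ω :=
    hv.fderiv_of_isOpen hΩ (by norm_num)
  exact ((h1.clm_apply contDiffOn_const).differentiableOn one_ne_zero).differentiableAt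
    (hΩ.mem_nhds hx)

/-- from the zeroth and first mode equations (trace-free case,
μ ≠ 0) one derives `∂u₋₁ = −(μ/2)u₀ − (i/μ) Im(∂²u₋₂)`. -/
theorem wd_um1_formula
    (Ω : Set (ℝ × ℝ)) (hΩ : IsOpen Ω) (μ : ℝ) (hμ : μ ≠ 0)
    (u0 : ℝ × ℝ → ℝ) (um1 um2 : ℝ × ℝ → ℂ)
    (hu0 : ContDiffOn ℝ 2 u0 Ω) (hum1 : ContDiffOn ℝ 2 um1 Ω)
    (hum2 : ContDiffOn ℝ 2 um2 Ω)
    (heq0 : ∀ x ∈ Ω, 2 * (wd um1 x).re + μ * u0 x = 0)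
    (heq1 : ∀ x ∈ Ω,
      wdbar (fun y => ((u0 y : ℝ) : ℂ)) x + wd um2 x + (μ : ℂ) * um1 x = 0) :
    ∀ x ∈ Ω,
      wd um1 x = -((μ : ℂ) / 2) * ((u0 x : ℝ) : ℂ)
        - (Complex.I / (μ : ℂ)) * (((wd (wd um2) x).im : ℝ) : ℂ) := by
  intro x hx
  have hxn : Ω ∈ 𝓝 x := hΩ.mem_nhds hx
  have hμ' : (μ : ℂ) ≠ 0 := Complex.ofReal_ne_zero.2 hμ
  set u0c : ℝ × ℝ → ℂ := fun y => ((u0 y : ℝ) : ℂ) with hu0c_def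
  -- fderiv of u0c in terms of u0
  have hfd_u0c : ∀ y ∈ Ω, fderiv ℝ u0c y = Complex.ofRealCLM.comp (fderiv ℝ u0 y) := by
    intro y hy
    have hd : DifferentiableAt ℝ u0 y :=
      (hu0.differentiableOn two_ne_zero).differentiableAt (hΩ.mem_nhds hy)
    exact (Complex.ofRealCLM.hasFDerivAt.comp y hd.hasFDerivAt).fderiv
  -- the real-coefficient form of wdbar u0c
  set G : ℝ × ℝ → ℂ := fun y =>
    (2:ℂ)⁻¹ * (((fderiv ℝ u0 y (1,0) : ℝ) : ℂ)
      + Complex.I * ((fderiv ℝ u0 y (0,1) : ℝ) : ℂ)) with hG_def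
  have hG_eq : Set.EqOn (wdbar u0c) G Ω := by
    intro y hy
    simp only [wdbar, pd1C, pd2C, hfd_u0c y hy, hG_def, ContinuousLinearMap.coe_comp',
      Function.comp_apply, Complex.ofRealCLM_apply]
    ring
  -- derivatives of the partial derivatives of u0
  have hd1 : DifferentiableAt ℝ (fun y => fderiv ℝ u0 y (1,0)) x := pd_diffAt hΩ hu0 (1,0) hx
  have hd2 : DifferentiableAt ℝ (fun y => fderiv ℝ u0 y (0,1)) x := pd_diffAt hΩ hu0 (0,1) hx
  set d1 := fderiv ℝ (fun y => fderiv ℝ u0 y (1,0)) x with hd1_def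
  set d2 := fderiv ℝ (fun y => fderiv ℝ u0 y (0,1)) x with hd2_def
  set DG : ℝ × ℝ →L[ℝ] ℂ := (2:ℂ)⁻¹ • ((Complex.ofRealCLM.comp d1)
      + Complex.I • (Complex.ofRealCLM.comp d2)) with hDG_def
  have hG' : HasFDerivAt G DG x := by
    have h1 : HasFDerivAt (fun y => ((fderiv ℝ u0 y (1,0) : ℝ) : ℂ))
        (Complex.ofRealCLM.comp d1) x := Complex.ofRealCLM.hasFDerivAt.comp x hd1.hasFDerivAt
    have h2 : HasFDerivAt (fun y => ((fderiv ℝ u0 y (0,1) : ℝ) : ℂ))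
        (Complex.ofRealCLM.comp d2) x := Complex.ofRealCLM.hasFDerivAt.comp x hd2.hasFDerivAt
    exact (h1.add (h2.const_mul Complex.I)).const_mul ((2:ℂ)⁻¹)
  -- wd um2 differentiable at x
  have hw2 : DifferentiableAt ℝ (wd um2) x := by
    have h1 := pd_diffAt hΩ hum2 (1,0) hx
    have h2 := pd_diffAt hΩ hum2 (0,1) hx
    have h3 : DifferentiableAt ℝ
        (fun y => fderiv ℝ um2 y (1,0) - Complex.I * fderiv ℝ um2 y (0,1)) x :=
      h1.sub (h2.const_mul Complex.I)
    have h4 : DifferentiableAt ℝ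
        (fun y => (fderiv ℝ um2 y (1,0) - Complex.I * fderiv ℝ um2 y (0,1)) / 2) x := by
      simp only [div_eq_mul_inv]
      exact h3.mul_const _
    exact h4
  set DW := fderiv ℝ (wd um2) x with hDW_def
  have hevG : wdbar u0c =ᶠ[𝓝 x] G := Filter.eventuallyEq_of_mem hxn hG_eq
  have hfdG : fderiv ℝ (wdbar u0c) x = DG := hevG.fderiv_eq.trans hG'.fderiv
  -- transport eq (ii) gives um1 in terms of wdbar u0c and wd um2
  have hum1_eq : Set.EqOn um1 (fun y => -(μ:ℂ)⁻¹ * (wdbar u0c y + wd um2 y)) Ω := by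
    intro y hy
    have h := heq1 y hy
    field_simp
    linear_combination h
  have hevU : um1 =ᶠ[𝓝 x] fun y => -(μ:ℂ)⁻¹ * (G y + wd um2 y) := by
    filter_upwards [hxn] with y hy
    simp only [hum1_eq hy, hG_eq hy]
  have hRHS : HasFDerivAt (fun y => -(μ:ℂ)⁻¹ * (G y + wd um2 y))
      ((-(μ:ℂ)⁻¹) • (DG + DW)) x := (hG'.add hw2.hasFDerivAt).const_mul _
  have hfdU : fderiv ℝ um1 x = (-(μ:ℂ)⁻¹) • (DG + DW) := hevU.fderiv_eq.trans hRHS.fderiv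
  -- Step A: wd um1 in terms of wd (wdbar u0c) and wd (wd um2)
  have hA : wd um1 x = -(μ:ℂ)⁻¹ * (wd (wdbar u0c) x + wd (wd um2) x) := by
    simp only [wd, pd1C, pd2C, hfdU, hfdG, ← hDW_def]
    simp only [ContinuousLinearMap.smul_apply, ContinuousLinearMap.add_apply, smul_eq_mul]
    ring
  -- symmetry of second derivatives of u0
  have hdiff_fd : DifferentiableAt ℝ (fun y => fderiv ℝ u0 y) x :=
    ((hu0.fderiv_of_isOpen (m := 1) hΩ (by norm_num)).differentiableOn
      one_ne_zero).differentiableAt hxn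
  have hx2 : HasFDerivAt (fun y => fderiv ℝ u0 y)
      (fderiv ℝ (fun y => fderiv ℝ u0 y) x) x := hdiff_fd.hasFDerivAt
  have hsym : d1 (0,1) = d2 (1,0) := by
    have hf : ∀ᶠ y in 𝓝 x, HasFDerivAt u0 (fderiv ℝ u0 y) y := by
      filter_upwards [hxn] with y hy
      exact ((hu0.differentiableOn two_ne_zero).differentiableAt (hΩ.mem_nhds hy)).hasFDerivAt
    have hsecond := second_derivative_symmetric_of_eventually hf hx2 ((1:ℝ),(0:ℝ)) ((0:ℝ),(1:ℝ))
    have h1 : HasFDerivAt (fun y => fderiv ℝ u0 y ((1:ℝ),(0:ℝ)))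
        ((fderiv ℝ u0 x).comp 0
          + (fderiv ℝ (fun y => fderiv ℝ u0 y) x).flip ((1:ℝ),(0:ℝ))) x :=
      hx2.clm_apply (hasFDerivAt_const ((1:ℝ),(0:ℝ)) x)
    have h2 : HasFDerivAt (fun y => fderiv ℝ u0 y ((0:ℝ),(1:ℝ)))
        ((fderiv ℝ u0 x).comp 0
          + (fderiv ℝ (fun y => fderiv ℝ u0 y) x).flip ((0:ℝ),(1:ℝ))) x :=
      hx2.clm_apply (hasFDerivAt_const ((0:ℝ),(1:ℝ)) x)
    rw [hd1_def, hd2_def, h1.fderiv, h2.fderiv]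
    simp only [ContinuousLinearMap.add_apply, ContinuousLinearMap.coe_comp',
      Function.comp_apply, ContinuousLinearMap.zero_apply, map_zero,
      ContinuousLinearMap.flip_apply, zero_add]
    exact hsecond.symm
  -- wd (wdbar u0c) x is real
  have hwdbar : wd (wdbar u0c) x = (((d1 (1,0) + d2 (0,1))/4 : ℝ) : ℂ) := by
    simp only [wd, pd1C, pd2C, hfdG, hDG_def]
    simp only [ContinuousLinearMap.smul_apply, ContinuousLinearMap.add_apply,
      ContinuousLinearMap.coe_comp', Function.comp_apply, Complex.ofRealCLM_apply,
      smul_eq_mul]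
    rw [hsym]
    push_cast
    linear_combination (-(((d2 (0,1) : ℝ) : ℂ))/4) * Complex.I_sq
  -- real and imaginary parts of wd um1 x
  have hre : (wd um1 x).re = -(μ * u0 x)/2 := by
    have := heq0 x hx; linarith
  have him : (wd um1 x).im = -μ⁻¹ * (wd (wd um2) x).im := by
    rw [hA, hwdbar]
    have hc : -(μ:ℂ)⁻¹ = ((-μ⁻¹ : ℝ) : ℂ) := by push_cast; ring
    rw [hc]
    simp [Complex.mul_im]
  -- assemble
  have hform : -((μ : ℂ) / 2) * ((u0 x : ℝ) : ℂ)
      - (Complex.I / (μ : ℂ)) * (((wd (wd um2) x).im : ℝ) : ℂ)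
      = ((-(μ * u0 x)/2 : ℝ) : ℂ) + ((-μ⁻¹ * (wd (wd um2) x).im : ℝ) : ℂ) * Complex.I := by
    push_cast
    field_simp
    ring
  rw [hform]
  apply Complex.ext
  · simpa using hre
  · simpa using him
end

section
/- Let C₁ ≥ 0 and C₂ ≤ 0 be real numbers and let u : ℝ² → ℂ be C² with compact support satisfying Δu + C₁ ∂̄(Re ∂u) + C₂ u = 0 on ℝ². Then u = 0 identically. -/
open Complex MeasureTheory

lemma kt_cd_pd {F : Type*} [NormedAddCommGroup F] [NormedSpace ℝ F] {f : ℝ × ℝ → F}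
    (hf : ContDiff ℝ 2 f) (v : ℝ × ℝ) : ContDiff ℝ 1 (fun x => fderiv ℝ f x v) :=
  (ContinuousLinearMap.apply ℝ F v).contDiff.comp (hf.fderiv_right (by norm_num))

lemma kt_cont_pd {F : Type*} [NormedAddCommGroup F] [NormedSpace ℝ F] {f : ℝ × ℝ → F}
    (hf : ContDiff ℝ 1 f) (v : ℝ × ℝ) : Continuous (fun x => fderiv ℝ f x v) :=
  (ContinuousLinearMap.apply ℝ F v).continuous.comp (hf.continuous_fderiv one_ne_zero)

lemma kt_ibp {f g : ℝ × ℝ → ℝ} (v : ℝ × ℝ)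
    (hf : ContDiff ℝ 1 f) (hg : ContDiff ℝ 1 g)
    (hgc : HasCompactSupport g) :
    ∫ x, f x * fderiv ℝ g x v = - ∫ x, fderiv ℝ f x v * g x := by
  apply integral_mul_fderiv_eq_neg_fderiv_mul_of_integrable
  · exact ((kt_cont_pd hf v).mul hg.continuous).integrable_of_hasCompactSupport hgc.mul_left
  · exact (hf.continuous.mul (kt_cont_pd hg v)).integrable_of_hasCompactSupport
      ((hgc.fderiv_apply ℝ v).mul_left)
  · exact (hf.continuous.mul hg.continuous).integrable_of_hasCompactSupport hgc.mul_left
  · exact fun x _ => hf.differentiable one_ne_zero x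
  · exact fun x _ => hg.differentiable one_ne_zero x

lemma kt_const_zero {a : ℝ × ℝ → ℝ} (ha : Differentiable ℝ a)
    (hz : ∀ x, fderiv ℝ a x = 0) (hac : HasCompactSupport a) : ∀ x, a x = 0 := by
  obtain ⟨y, hy⟩ := Set.ne_univ_iff_exists_notMem _ |>.mp hac.ne_univ
  intro x
  calc a x = a y := is_const_of_fderiv_eq_zero ha hz x y
    _ = 0 := image_eq_zero_of_notMem_tsupport hy

lemma kt_energy (C1 C2 : ℝ) (hC1 : 0 ≤ C1) (hC2 : C2 ≤ 0)
    (a b w : ℝ × ℝ → ℝ)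
    (ha : ContDiff ℝ 2 a) (hb : ContDiff ℝ 2 b) (hw : ContDiff ℝ 1 w)
    (hac : HasCompactSupport a) (hbc : HasCompactSupport b) (hwc : HasCompactSupport w)
    (hwev : ∀ x, 2 * w x = pd1R a x + pd2R b x)
    (hre : ∀ x, pd1R (pd1R a) x + pd2R (pd2R a) x + C1 / 2 * pd1R w x + C2 * a x = 0)
    (him : ∀ x, pd1R (pd1R b) x + pd2R (pd2R b) x + C1 / 2 * pd2R w x + C2 * b x = 0) :
    ∀ x, a x = 0 ∧ b x = 0 := by
  have ha1 : ContDiff ℝ 1 a := ha.of_le one_le_two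
  have hb1 : ContDiff ℝ 1 b := hb.of_le one_le_two
  have hP1a : ContDiff ℝ 1 (pd1R a) := kt_cd_pd ha (1,0)
  have hP2a : ContDiff ℝ 1 (pd2R a) := kt_cd_pd ha (0,1)
  have hP1b : ContDiff ℝ 1 (pd1R b) := kt_cd_pd hb (1,0)
  have hP2b : ContDiff ℝ 1 (pd2R b) := kt_cd_pd hb (0,1)
  have hP1ac : HasCompactSupport (pd1R a) := hac.fderiv_apply ℝ (1,0)
  have hP2ac : HasCompactSupport (pd2R a) := hac.fderiv_apply ℝ (0,1)
  have hP1bc : HasCompactSupport (pd1R b) := hbc.fderiv_apply ℝ (1,0)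
  have hP2bc : HasCompactSupport (pd2R b) := hbc.fderiv_apply ℝ (0,1)
  -- integration by parts
  have I1 : ∫ x, a x * pd1R (pd1R a) x = - ∫ x, pd1R a x * pd1R a x :=
    kt_ibp (1,0) ha1 hP1a hP1ac
  have I2 : ∫ x, a x * pd2R (pd2R a) x = - ∫ x, pd2R a x * pd2R a x :=
    kt_ibp (0,1) ha1 hP2a hP2ac
  have I3 : ∫ x, b x * pd1R (pd1R b) x = - ∫ x, pd1R b x * pd1R b x :=
    kt_ibp (1,0) hb1 hP1b hP1bc
  have I4 : ∫ x, b x * pd2R (pd2R b) x = - ∫ x, pd2R b x * pd2R b x :=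
    kt_ibp (0,1) hb1 hP2b hP2bc
  have I5 : ∫ x, a x * pd1R w x = - ∫ x, pd1R a x * w x :=
    kt_ibp (1,0) ha1 hw hwc
  have I6 : ∫ x, b x * pd2R w x = - ∫ x, pd2R b x * w x :=
    kt_ibp (0,1) hb1 hw hwc
  -- integrability of all atomic terms
  have i1 : Integrable (fun x => a x * pd1R (pd1R a) x) :=
    (ha1.continuous.mul (kt_cont_pd hP1a (1,0))).integrable_of_hasCompactSupport hac.mul_right
  have i2 : Integrable (fun x => a x * pd2R (pd2R a) x) :=
    (ha1.continuous.mul (kt_cont_pd hP2a (0,1))).integrable_of_hasCompactSupport hac.mul_right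
  have i3 : Integrable (fun x => b x * pd1R (pd1R b) x) :=
    (hb1.continuous.mul (kt_cont_pd hP1b (1,0))).integrable_of_hasCompactSupport hbc.mul_right
  have i4 : Integrable (fun x => b x * pd2R (pd2R b) x) :=
    (hb1.continuous.mul (kt_cont_pd hP2b (0,1))).integrable_of_hasCompactSupport hbc.mul_right
  have i5 : Integrable (fun x => C1 / 2 * (a x * pd1R w x)) :=
    (continuous_const.mul (ha1.continuous.mul (kt_cont_pd hw (1,0)))).integrable_of_hasCompactSupport
      (hac.mul_right.mul_left)
  have i6 : Integrable (fun x => C1 / 2 * (b x * pd2R w x)) :=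
    (continuous_const.mul (hb1.continuous.mul (kt_cont_pd hw (0,1)))).integrable_of_hasCompactSupport
      (hbc.mul_right.mul_left)
  have i7 : Integrable (fun x => C2 * (a x * a x)) :=
    (continuous_const.mul (ha1.continuous.mul ha1.continuous)).integrable_of_hasCompactSupport
      (hac.mul_right.mul_left)
  have i8 : Integrable (fun x => C2 * (b x * b x)) :=
    (continuous_const.mul (hb1.continuous.mul hb1.continuous)).integrable_of_hasCompactSupport
      (hbc.mul_right.mul_left)
  have iA1 : Integrable (fun x => pd1R a x * pd1R a x) :=
    (hP1a.continuous.mul hP1a.continuous).integrable_of_hasCompactSupport hP1ac.mul_right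
  have iA2 : Integrable (fun x => pd2R a x * pd2R a x) :=
    (hP2a.continuous.mul hP2a.continuous).integrable_of_hasCompactSupport hP2ac.mul_right
  have iB1 : Integrable (fun x => pd1R b x * pd1R b x) :=
    (hP1b.continuous.mul hP1b.continuous).integrable_of_hasCompactSupport hP1bc.mul_right
  have iB2 : Integrable (fun x => pd2R b x * pd2R b x) :=
    (hP2b.continuous.mul hP2b.continuous).integrable_of_hasCompactSupport hP2bc.mul_right
  have iaw : Integrable (fun x => pd1R a x * w x) :=
    (hP1a.continuous.mul hw.continuous).integrable_of_hasCompactSupport hwc.mul_left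
  have ibw : Integrable (fun x => pd2R b x * w x) :=
    (hP2b.continuous.mul hw.continuous).integrable_of_hasCompactSupport hwc.mul_left
  -- the pointwise energy identity
  have EQ : ∀ x : ℝ × ℝ, a x * pd1R (pd1R a) x + a x * pd2R (pd2R a) x
      + b x * pd1R (pd1R b) x + b x * pd2R (pd2R b) x
      + C1 / 2 * (a x * pd1R w x) + C1 / 2 * (b x * pd2R w x)
      + C2 * (a x * a x) + C2 * (b x * b x) = 0 := by
    intro x
    linear_combination a x * hre x + b x * him x
  have SUMZERO : (∫ x, (a x * pd1R (pd1R a) x + a x * pd2R (pd2R a) x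
      + b x * pd1R (pd1R b) x + b x * pd2R (pd2R b) x
      + C1 / 2 * (a x * pd1R w x) + C1 / 2 * (b x * pd2R w x)
      + C2 * (a x * a x) + C2 * (b x * b x))) = 0 := by
    rw [integral_congr_ae (Filter.Eventually.of_forall EQ)]
    exact integral_zero _ _
  have j2 : Integrable (fun x => a x * pd1R (pd1R a) x + a x * pd2R (pd2R a) x) := i1.add i2
  have j3 : Integrable (fun x => a x * pd1R (pd1R a) x + a x * pd2R (pd2R a) x
      + b x * pd1R (pd1R b) x) := j2.add i3
  have j4 : Integrable (fun x => a x * pd1R (pd1R a) x + a x * pd2R (pd2R a) x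
      + b x * pd1R (pd1R b) x + b x * pd2R (pd2R b) x) := j3.add i4
  have j5 : Integrable (fun x => a x * pd1R (pd1R a) x + a x * pd2R (pd2R a) x
      + b x * pd1R (pd1R b) x + b x * pd2R (pd2R b) x
      + C1 / 2 * (a x * pd1R w x)) := j4.add i5
  have j6 : Integrable (fun x => a x * pd1R (pd1R a) x + a x * pd2R (pd2R a) x
      + b x * pd1R (pd1R b) x + b x * pd2R (pd2R b) x
      + C1 / 2 * (a x * pd1R w x) + C1 / 2 * (b x * pd2R w x)) := j5.add i6
  have j7 : Integrable (fun x => a x * pd1R (pd1R a) x + a x * pd2R (pd2R a) x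
      + b x * pd1R (pd1R b) x + b x * pd2R (pd2R b) x
      + C1 / 2 * (a x * pd1R w x) + C1 / 2 * (b x * pd2R w x)
      + C2 * (a x * a x)) := j6.add i7
  have e8 : (∫ x, (a x * pd1R (pd1R a) x + a x * pd2R (pd2R a) x
      + b x * pd1R (pd1R b) x + b x * pd2R (pd2R b) x
      + C1 / 2 * (a x * pd1R w x) + C1 / 2 * (b x * pd2R w x)
      + C2 * (a x * a x) + C2 * (b x * b x)))
      = (∫ x, (a x * pd1R (pd1R a) x + a x * pd2R (pd2R a) x
      + b x * pd1R (pd1R b) x + b x * pd2R (pd2R b) x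
      + C1 / 2 * (a x * pd1R w x) + C1 / 2 * (b x * pd2R w x)
      + C2 * (a x * a x))) + ∫ x, C2 * (b x * b x) := integral_add j7 i8
  have e7 : (∫ x, (a x * pd1R (pd1R a) x + a x * pd2R (pd2R a) x
      + b x * pd1R (pd1R b) x + b x * pd2R (pd2R b) x
      + C1 / 2 * (a x * pd1R w x) + C1 / 2 * (b x * pd2R w x)
      + C2 * (a x * a x)))
      = (∫ x, (a x * pd1R (pd1R a) x + a x * pd2R (pd2R a) x
      + b x * pd1R (pd1R b) x + b x * pd2R (pd2R b) x
      + C1 / 2 * (a x * pd1R w x) + C1 / 2 * (b x * pd2R w x)))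
      + ∫ x, C2 * (a x * a x) := integral_add j6 i7
  have e6 : (∫ x, (a x * pd1R (pd1R a) x + a x * pd2R (pd2R a) x
      + b x * pd1R (pd1R b) x + b x * pd2R (pd2R b) x
      + C1 / 2 * (a x * pd1R w x) + C1 / 2 * (b x * pd2R w x)))
      = (∫ x, (a x * pd1R (pd1R a) x + a x * pd2R (pd2R a) x
      + b x * pd1R (pd1R b) x + b x * pd2R (pd2R b) x
      + C1 / 2 * (a x * pd1R w x)))
      + ∫ x, C1 / 2 * (b x * pd2R w x) := integral_add j5 i6
  have e5 : (∫ x, (a x * pd1R (pd1R a) x + a x * pd2R (pd2R a) x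
      + b x * pd1R (pd1R b) x + b x * pd2R (pd2R b) x
      + C1 / 2 * (a x * pd1R w x)))
      = (∫ x, (a x * pd1R (pd1R a) x + a x * pd2R (pd2R a) x
      + b x * pd1R (pd1R b) x + b x * pd2R (pd2R b) x))
      + ∫ x, C1 / 2 * (a x * pd1R w x) := integral_add j4 i5
  have e4 : (∫ x, (a x * pd1R (pd1R a) x + a x * pd2R (pd2R a) x
      + b x * pd1R (pd1R b) x + b x * pd2R (pd2R b) x))
      = (∫ x, (a x * pd1R (pd1R a) x + a x * pd2R (pd2R a) x
      + b x * pd1R (pd1R b) x))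
      + ∫ x, b x * pd2R (pd2R b) x := integral_add j3 i4
  have e3 : (∫ x, (a x * pd1R (pd1R a) x + a x * pd2R (pd2R a) x
      + b x * pd1R (pd1R b) x))
      = (∫ x, (a x * pd1R (pd1R a) x + a x * pd2R (pd2R a) x))
      + ∫ x, b x * pd1R (pd1R b) x := integral_add j2 i3
  have e2 : (∫ x, (a x * pd1R (pd1R a) x + a x * pd2R (pd2R a) x))
      = (∫ x, a x * pd1R (pd1R a) x) + ∫ x, a x * pd2R (pd2R a) x := integral_add i1 i2
  rw [e8, e7, e6, e5, e4, e3, e2, integral_const_mul, integral_const_mul, integral_const_mul,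
      integral_const_mul, I1, I2, I3, I4, I5, I6] at SUMZERO
  -- the cross-term identity
  have hpt : ∀ x : ℝ × ℝ, pd1R a x * w x + pd2R b x * w x = 2 * (w x * w x) := by
    intro x
    linear_combination (-(w x)) * hwev x
  have I56 : (∫ x, pd1R a x * w x) + (∫ x, pd2R b x * w x) = 2 * ∫ x, w x * w x := by
    rw [← integral_add iaw ibw, integral_congr_ae (Filter.Eventually.of_forall hpt)]
    exact integral_const_mul 2 _
  -- nonnegativity
  have nA1 : 0 ≤ ∫ x, pd1R a x * pd1R a x := integral_nonneg fun x => mul_self_nonneg _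
  have nA2 : 0 ≤ ∫ x, pd2R a x * pd2R a x := integral_nonneg fun x => mul_self_nonneg _
  have nB1 : 0 ≤ ∫ x, pd1R b x * pd1R b x := integral_nonneg fun x => mul_self_nonneg _
  have nB2 : 0 ≤ ∫ x, pd2R b x * pd2R b x := integral_nonneg fun x => mul_self_nonneg _
  have nW : 0 ≤ ∫ x, w x * w x := integral_nonneg fun x => mul_self_nonneg _
  have nQa : 0 ≤ ∫ x, a x * a x := integral_nonneg fun x => mul_self_nonneg _
  have nQb : 0 ≤ ∫ x, b x * b x := integral_nonneg fun x => mul_self_nonneg _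
  have key : (∫ x, pd1R a x * pd1R a x) + (∫ x, pd2R a x * pd2R a x)
      + (∫ x, pd1R b x * pd1R b x) + (∫ x, pd2R b x * pd2R b x)
      + C1 * (∫ x, w x * w x) - C2 * (∫ x, a x * a x) - C2 * (∫ x, b x * b x) = 0 := by
    linear_combination (-1 : ℝ) * SUMZERO - (C1 / 2) * I56
  have t1 : 0 ≤ C1 * ∫ x, w x * w x := mul_nonneg hC1 nW
  have t2 : 0 ≤ (-C2) * ∫ x, a x * a x := mul_nonneg (by linarith) nQa
  have t3 : 0 ≤ (-C2) * ∫ x, b x * b x := mul_nonneg (by linarith) nQb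
  have hA1 : (∫ x, pd1R a x * pd1R a x) = 0 := by linarith
  have hA2 : (∫ x, pd2R a x * pd2R a x) = 0 := by linarith
  have hB1 : (∫ x, pd1R b x * pd1R b x) = 0 := by linarith
  have hB2 : (∫ x, pd2R b x * pd2R b x) = 0 := by linarith
  -- deduce vanishing of all first partials
  have z : ∀ (f : ℝ × ℝ → ℝ), ContDiff ℝ 1 f → HasCompactSupport f →
      (∫ x, f x * f x) = 0 → ∀ x, f x = 0 := by
    intro f hf hfc hint x
    have hi : Integrable (fun x => f x * f x) :=
      (hf.continuous.mul hf.continuous).integrable_of_hasCompactSupport hfc.mul_right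
    have hae := (integral_eq_zero_iff_of_nonneg (fun x => mul_self_nonneg (f x)) hi).mp hint
    have heq : (fun x => f x * f x) = (fun _ => (0:ℝ)) :=
      ((hf.continuous.mul hf.continuous).ae_eq_iff_eq volume continuous_const).mp hae
    have := congrFun heq x
    exact mul_self_eq_zero.mp this
  have z1 := z (pd1R a) hP1a hP1ac hA1
  have z2 := z (pd2R a) hP2a hP2ac hA2
  have z3 := z (pd1R b) hP1b hP1bc hB1
  have z4 := z (pd2R b) hP2b hP2bc hB2
  -- the full derivatives vanish
  have fz : ∀ (f : ℝ × ℝ → ℝ), (∀ x, pd1R f x = 0) → (∀ x, pd2R f x = 0) →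
      ∀ x, fderiv ℝ f x = 0 := by
    intro f h1 h2 x
    refine ContinuousLinearMap.ext fun v => ?_
    have hv : v = v.1 • ((1:ℝ), (0:ℝ)) + v.2 • ((0:ℝ), (1:ℝ)) := by
      simp [Prod.ext_iff]
    rw [hv]
    simp only [_root_.map_add, _root_.map_smul, smul_eq_mul, ContinuousLinearMap.zero_apply]
    have e1 : fderiv ℝ f x (1, 0) = 0 := h1 x
    have e2 : fderiv ℝ f x (0, 1) = 0 := h2 x
    simp [e1, e2]
  intro x
  constructor
  · exact kt_const_zero (ha1.differentiable one_ne_zero) (fz a z1 z2) hac x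
  · exact kt_const_zero (hb1.differentiable one_ne_zero) (fz b z3 z4) hbc x

lemma kt_pd_re {v : ℝ × ℝ → ℂ} (hv : Differentiable ℝ v) (e x : ℝ × ℝ) :
    fderiv ℝ (fun y => (v y).re) x e = (fderiv ℝ v x e).re := by
  have h : HasFDerivAt (fun y => (v y).re) (Complex.reCLM.comp (fderiv ℝ v x)) x :=
    Complex.reCLM.hasFDerivAt.comp x (hv x).hasFDerivAt
  rw [h.fderiv]; rfl

lemma kt_pd_im {v : ℝ × ℝ → ℂ} (hv : Differentiable ℝ v) (e x : ℝ × ℝ) :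
    fderiv ℝ (fun y => (v y).im) x e = (fderiv ℝ v x e).im := by
  have h : HasFDerivAt (fun y => (v y).im) (Complex.imCLM.comp (fderiv ℝ v x)) x :=
    Complex.imCLM.hasFDerivAt.comp x (hv x).hasFDerivAt
  rw [h.fderiv]; rfl

lemma kt_pd_ofReal {v : ℝ × ℝ → ℝ} (hv : Differentiable ℝ v) (e x : ℝ × ℝ) :
    fderiv ℝ (fun y => ((v y : ℝ) : ℂ)) x e = ((fderiv ℝ v x e : ℝ) : ℂ) := by
  have h : HasFDerivAt (fun y => ((v y : ℝ) : ℂ)) (Complex.ofRealCLM.comp (fderiv ℝ v x)) x :=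
    Complex.ofRealCLM.hasFDerivAt.comp x (hv x).hasFDerivAt
  rw [h.fderiv]; rfl


/-- kernel triviality — a C² compactly supported solution of
`Δu + C₁∂̄(Re ∂u) + C₂u = 0` with `C₁ ≥ 0`, `C₂ ≤ 0` vanishes identically. -/
theorem kernel_trivial
    (C1 C2 : ℝ) (hC1 : 0 ≤ C1) (hC2 : C2 ≤ 0)
    (u : ℝ × ℝ → ℂ) (hu : ContDiff ℝ 2 u) (huc : HasCompactSupport u)
    (heq : ∀ x : ℝ × ℝ,
      lapC u x + (C1 : ℂ) * wdbar (fun y => (((wd u y).re : ℝ) : ℂ)) x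
        + (C2 : ℂ) * u x = 0) :
    ∀ x : ℝ × ℝ, u x = 0 := by
  have hud : Differentiable ℝ u := hu.differentiable two_ne_zero
  have hcd1 : ContDiff ℝ 1 (pd1C u) := kt_cd_pd hu (1,0)
  have hcd2 : ContDiff ℝ 1 (pd2C u) := kt_cd_pd hu (0,1)
  have ha : ContDiff ℝ 2 (fun x => (u x).re) := Complex.reCLM.contDiff.comp hu
  have hb : ContDiff ℝ 2 (fun x => (u x).im) := Complex.imCLM.contDiff.comp hu
  have hwdcd : ContDiff ℝ 1 (wd u) := by
    have h : ContDiff ℝ 1 (fun x => (pd1C u x - Complex.I * pd2C u x) / 2) :=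
      (hcd1.sub (contDiff_const.mul hcd2)).div_const 2
    exact h
  have hw : ContDiff ℝ 1 (fun x => (wd u x).re) := Complex.reCLM.contDiff.comp hwdcd
  have hac : HasCompactSupport (fun x => (u x).re) := huc.comp_left (g := Complex.re) rfl
  have hbc : HasCompactSupport (fun x => (u x).im) := huc.comp_left (g := Complex.im) rfl
  have hwc : HasCompactSupport (fun x => (wd u x).re) := by
    apply huc.mono'
    intro x hx
    contrapose! hx
    simp only [Function.mem_support, ne_eq, not_not]
    have h0 : fderiv ℝ u x = 0 := fderiv_of_notMem_tsupport _ hx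
    simp [wd, pd1C, pd2C, h0]
  -- first-order component identities
  have hp1a : ∀ y, pd1R (fun x => (u x).re) y = (pd1C u y).re := fun y => kt_pd_re hud (1,0) y
  have hp2a : ∀ y, pd2R (fun x => (u x).re) y = (pd2C u y).re := fun y => kt_pd_re hud (0,1) y
  have hp1b : ∀ y, pd1R (fun x => (u x).im) y = (pd1C u y).im := fun y => kt_pd_im hud (1,0) y
  have hp2b : ∀ y, pd2R (fun x => (u x).im) y = (pd2C u y).im := fun y => kt_pd_im hud (0,1) y
  have hf1a : pd1R (fun x => (u x).re) = fun y => (pd1C u y).re := funext hp1a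
  have hf2a : pd2R (fun x => (u x).re) = fun y => (pd2C u y).re := funext hp2a
  have hf1b : pd1R (fun x => (u x).im) = fun y => (pd1C u y).im := funext hp1b
  have hf2b : pd2R (fun x => (u x).im) = fun y => (pd2C u y).im := funext hp2b
  -- second-order component identities
  have hpp1a : ∀ y, pd1R (pd1R (fun x => (u x).re)) y = (pd1C (pd1C u) y).re := by
    intro y; rw [hf1a]; exact kt_pd_re (hcd1.differentiable one_ne_zero) (1,0) y
  have hpp2a : ∀ y, pd2R (pd2R (fun x => (u x).re)) y = (pd2C (pd2C u) y).re := by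
    intro y; rw [hf2a]; exact kt_pd_re (hcd2.differentiable one_ne_zero) (0,1) y
  have hpp1b : ∀ y, pd1R (pd1R (fun x => (u x).im)) y = (pd1C (pd1C u) y).im := by
    intro y; rw [hf1b]; exact kt_pd_im (hcd1.differentiable one_ne_zero) (1,0) y
  have hpp2b : ∀ y, pd2R (pd2R (fun x => (u x).im)) y = (pd2C (pd2C u) y).im := by
    intro y; rw [hf2b]; exact kt_pd_im (hcd2.differentiable one_ne_zero) (0,1) y
  -- the function w and its properties
  have hwre : ∀ y, (wd u y).re = ((pd1C u y).re + (pd2C u y).im) / 2 := by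
    intro y
    rw [show wd u y = (pd1C u y - Complex.I * pd2C u y) / 2 from rfl,
      show (2 : ℂ) = ((2 : ℝ) : ℂ) by norm_num, Complex.div_ofReal_re, Complex.sub_re,
      Complex.I_mul_re]
    ring
  have hwev : ∀ y, 2 * (fun x => (wd u x).re) y
      = pd1R (fun x => (u x).re) y + pd2R (fun x => (u x).im) y := by
    intro y
    rw [hp1a, hp2b]
    simp only [hwre y]
    ring
  -- derivatives of the complexified w
  have hV1 : ∀ y, pd1C (fun x => (((wd u x).re : ℝ) : ℂ)) y
      = ((pd1R (fun x => (wd u x).re) y : ℝ) : ℂ) :=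
    fun y => kt_pd_ofReal (hw.differentiable one_ne_zero) (1,0) y
  have hV2 : ∀ y, pd2C (fun x => (((wd u x).re : ℝ) : ℂ)) y
      = ((pd2R (fun x => (wd u x).re) y : ℝ) : ℂ) :=
    fun y => kt_pd_ofReal (hw.differentiable one_ne_zero) (0,1) y
  -- the real and imaginary parts of the equation
  have hre : ∀ y, pd1R (pd1R (fun x => (u x).re)) y + pd2R (pd2R (fun x => (u x).re)) y
      + C1 / 2 * pd1R (fun x => (wd u x).re) y + C2 * (fun x => (u x).re) y = 0 := by
    intro y
    have h := heq y
    rw [show lapC u y = pd1C (pd1C u) y + pd2C (pd2C u) y from rfl,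
      show wdbar (fun x => (((wd u x).re : ℝ) : ℂ)) y
        = (pd1C (fun x => (((wd u x).re : ℝ) : ℂ)) y
          + Complex.I * pd2C (fun x => (((wd u x).re : ℝ) : ℂ)) y) / 2 from rfl,
      hV1 y, hV2 y] at h
    have h2 := congrArg Complex.re h
    rw [show ((2 : ℂ)) = ((2 : ℝ) : ℂ) by norm_num] at h2
    simp only [Complex.add_re, Complex.re_ofReal_mul, Complex.div_ofReal_re,
      Complex.ofReal_re, Complex.I_mul_re, Complex.ofReal_im, neg_zero, add_zero,
      Complex.zero_re] at h2
    rw [hpp1a y, hpp2a y]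
    linear_combination h2
  have him : ∀ y, pd1R (pd1R (fun x => (u x).im)) y + pd2R (pd2R (fun x => (u x).im)) y
      + C1 / 2 * pd2R (fun x => (wd u x).re) y + C2 * (fun x => (u x).im) y = 0 := by
    intro y
    have h := heq y
    rw [show lapC u y = pd1C (pd1C u) y + pd2C (pd2C u) y from rfl,
      show wdbar (fun x => (((wd u x).re : ℝ) : ℂ)) y
        = (pd1C (fun x => (((wd u x).re : ℝ) : ℂ)) y
          + Complex.I * pd2C (fun x => (((wd u x).re : ℝ) : ℂ)) y) / 2 from rfl,
      hV1 y, hV2 y] at h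
    have h2 := congrArg Complex.im h
    rw [show ((2 : ℂ)) = ((2 : ℝ) : ℂ) by norm_num] at h2
    simp only [Complex.add_im, Complex.im_ofReal_mul, Complex.div_ofReal_im,
      Complex.ofReal_im, Complex.I_mul_im, Complex.ofReal_re, zero_add,
      Complex.zero_im] at h2
    rw [hpp1b y, hpp2b y]
    linear_combination h2
  have main := kt_energy C1 C2 hC1 hC2 _ _ _ ha hb hw hac hbc hwc hwev hre him
  intro x
  obtain ⟨h1, h2⟩ := main x
  exact Complex.ext (by simpa using h1) (by simpa using h2)
end
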